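/- Let 𝔸 = (A, ≤, →, Σ) be an implicative algebra with |A| < κ for a strongly inaccessible cardinal κ, and let W, ∈_W, =_W be as defined below. Then there exists s₃ ∈ Σ such that s₃ ≤ ⨅_{α,β,γ∈W} (((α =_W β) × (γ =_W α)) → (γ =_W β)). -/

import Mathlib

universe u

/-- An implicative algebra `𝔸 = (A, ≤, →, Σ)`:  a complete lattice `(A, ≤)` together with an
implication `imp` which is antitone in its first argument, monotone in its second argument and
turns infima in the second argument into infima, and a separator `Sig ⊆ A` which is upward
closed, closed under modus ponens and contains the combinators `K` and `S`. -/
structure ImplicativeAlgebra (A : Type u) [CompleteLattice A] where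
  imp : A → A → A
  imp_antitone : ∀ ⦃a a' b : A⦄, a ≤ a' → imp a' b ≤ imp a b
  imp_monotone : ∀ ⦃a b b' : A⦄, b ≤ b' → imp a b ≤ imp a b'
  imp_sInf : ∀ (a : A) (S : Set A), imp a (sInf S) = ⨅ b ∈ S, imp a b
  Sig : Set A
  Sig_upward : ∀ ⦃a b : A⦄, a ∈ Sig → a ≤ b → b ∈ Sig
  Sig_mp : ∀ ⦃a b : A⦄, imp a b ∈ Sig → a ∈ Sig → b ∈ Sig
  Sig_K : (⨅ a : A, ⨅ b : A, imp a (imp b a)) ∈ Sig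
  Sig_S : (⨅ a : A, ⨅ b : A, ⨅ c : A,
      imp (imp a (imp b c)) (imp (imp a b) (imp a c))) ∈ Sig

namespace ImplicativeAlgebra

variable {A : Type u} [CompleteLattice A]

/-- `a × b := ⨅ x, ((a → (b → x)) → x)`. -/
def times (IA : ImplicativeAlgebra A) (a b : A) : A :=
  ⨅ x : A, IA.imp (IA.imp a (IA.imp b x)) x

/-- `a + b := ⨅ x, ((a → x) → ((b → x) → x))`. -/
def plus (IA : ImplicativeAlgebra A) (a b : A) : A :=
  ⨅ x : A, IA.imp (IA.imp a x) (IA.imp (IA.imp b x) x)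

/-- `∃⃗_{i} f i := ⨅ x, ((⨅ i, (f i → x)) → x)`.  (`∀⃗` is just `⨅`.) -/
def aex (IA : ImplicativeAlgebra A) {ι : Sort*} (f : ι → A) : A :=
  ⨅ x : A, IA.imp (⨅ i, IA.imp (f i) x) x

/-- `φ ⊢_{Σ[I]} ψ` iff `⨅ i, (φ i → ψ i) ∈ Σ`. -/
def SigLe (IA : ImplicativeAlgebra A) {ι : Sort*} (f g : ι → A) : Prop :=
  (⨅ i, IA.imp (f i) (g i)) ∈ IA.Sig

/-- `φ ≡_{Σ[I]} ψ` iff `φ ⊢_{Σ[I]} ψ` and `ψ ⊢_{Σ[I]} φ`. -/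
def SigEquiv (IA : ImplicativeAlgebra A) {ι : Sort*} (f g : ι → A) : Prop :=
  IA.SigLe f g ∧ IA.SigLe g f

end ImplicativeAlgebra

/-- Pre-elements of the cumulative hierarchy of partial functions valued in `A`:
an element is an `A`-labelled family of previously constructed elements, i.e. a partial
function (presented by a family indexed by its domain) from earlier elements to `A`. -/
inductive PreW (A : Type u) : Type (u + 1)
  | mk (ι : Type u) (fam : ι → PreW A) (val : ι → A)

namespace PreW

variable {A : Type u}

/-- The (index type of the) domain of a partial function. -/
def dom : PreW A → Type u
  | ⟨ι, _, _⟩ => ι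

/-- The family of elements of the domain. -/
def fam : (w : PreW A) → w.dom → PreW A
  | ⟨_, f, _⟩ => f

/-- The values in `A` of the partial function. -/
def val : (w : PreW A) → w.dom → A
  | ⟨_, _, v⟩ => v

/-- `w` is hereditarily of size `< κ`:  this carves out exactly the elements of the stage
`W_κ` of the hierarchy (for `κ` inaccessible). -/
def HSmall (κ : Cardinal.{u}) : PreW A → Prop
  | ⟨ι, f, _⟩ => Cardinal.mk ι < κ ∧ ∀ i, HSmall κ (f i)

theorem HSmall.fam {κ : Cardinal.{u}} :
    ∀ {w : PreW A}, w.HSmall κ → ∀ i : w.dom, (w.fam i).HSmall κ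
  | ⟨_, _, _⟩, h, i => h.2 i

/-- The rank of an element of the hierarchy. -/
noncomputable def rank : PreW A → Ordinal.{u}
  | ⟨_, f, _⟩ => ⨆ i, Order.succ (rank (f i))

theorem rank_lt_mk {ι : Type u} (f : ι → PreW A) (v : ι → A) (i : ι) :
    (f i).rank < (PreW.mk ι f v).rank := by
  have h : Order.succ (f i).rank ≤ ⨆ j, Order.succ (f j).rank := Ordinal.le_iSup _ i
  have : (f i).rank < ⨆ j, Order.succ (f j).rank :=
    lt_of_lt_of_le (Order.lt_succ _) h
  simpa [rank] using this

end PreW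

namespace ImplicativeAlgebra

variable {A : Type u} [CompleteLattice A]

/-- `α =_W β`, defined by recursion on rank:
`α =_W β := (α ⊆_W β) × (β ⊆_W α)` where
`α ⊆_W β := ∀⃗_{t ∈ dom α} (α t → (fam α t ∈_W β))` and
`γ ∈_W β := ∃⃗_{s ∈ dom β} (β s × (fam β s =_W γ))`. -/
noncomputable def eqW (IA : ImplicativeAlgebra A) : PreW A → PreW A → A
  | ⟨ι₁, f₁, v₁⟩, ⟨ι₂, f₂, v₂⟩ =>
    IA.times
      (⨅ t : ι₁, IA.imp (v₁ t)
        (IA.aex fun s : ι₂ => IA.times (v₂ s) (IA.eqW (f₂ s) (f₁ t))))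
      (⨅ t : ι₂, IA.imp (v₂ t)
        (IA.aex fun s : ι₁ => IA.times (v₁ s) (IA.eqW (f₁ s) (f₂ t))))
termination_by α β => max α.rank β.rank
decreasing_by
  · exact max_lt (lt_max_of_lt_right (PreW.rank_lt_mk f₂ v₂ s))
      (lt_max_of_lt_left (PreW.rank_lt_mk f₁ v₁ t))
  · exact max_lt (lt_max_of_lt_left (PreW.rank_lt_mk f₁ v₁ s))
      (lt_max_of_lt_right (PreW.rank_lt_mk f₂ v₂ t))

/-- `α ∈_W β := ∃⃗_{s ∈ dom β} (β s × (fam β s =_W α))`. -/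
noncomputable def memW (IA : ImplicativeAlgebra A) (α β : PreW A) : A :=
  IA.aex fun s : β.dom => IA.times (β.val s) (IA.eqW (β.fam s) α)

/-- `α ⊆_W β := ∀⃗_{t ∈ dom α} (α t → (fam α t ∈_W β))`. -/
noncomputable def subW (IA : ImplicativeAlgebra A) (α β : PreW A) : A :=
  ⨅ t : α.dom, IA.imp (α.val t) (IA.memW (α.fam t) β)

end ImplicativeAlgebra

/-- The stage `W = W_κ` of the hierarchy: all hereditarily `< κ`-sized elements. -/
def WSet (A : Type u) (κ : Cardinal.{u}) : Type (u + 1) :=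
  {w : PreW A // w.HSmall κ}

/-- An element of the domain of `w ∈ W`, as an element of `W`. -/
def WSet.fam {A : Type u} {κ : Cardinal.{u}} (w : WSet A κ) (i : w.1.dom) : WSet A κ :=
  ⟨w.1.fam i, w.2.fam i⟩

/-- Formulas (in context of length `n`) of the first-order language of set theory, with
(de Bruijn-style) variables `Fin n`, binary predicates `∈` and `=`, connectives `⊥`, `∧`, `∨`,
`→` and quantifiers `∃`, `∀` (binding the last variable of the enlarged context). -/
inductive SetFormula : ℕ → Type
  | bot {n : ℕ} : SetFormula n
  | mem {n : ℕ} (i j : Fin n) : SetFormula n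
  | eq {n : ℕ} (i j : Fin n) : SetFormula n
  | and {n : ℕ} (φ ψ : SetFormula n) : SetFormula n
  | or {n : ℕ} (φ ψ : SetFormula n) : SetFormula n
  | imp {n : ℕ} (φ ψ : SetFormula n) : SetFormula n
  | ex {n : ℕ} (φ : SetFormula (n + 1)) : SetFormula n
  | all {n : ℕ} (φ : SetFormula (n + 1)) : SetFormula n

namespace SetFormula

/-- Renaming of variables (since the only terms of the language of set theory are variables,
substitution is a special case). -/
def rename : {n m : ℕ} → (Fin n → Fin m) → SetFormula n → SetFormula m
  | _, _, _, .bot => .bot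
  | _, _, f, .mem i j => .mem (f i) (f j)
  | _, _, f, .eq i j => .eq (f i) (f j)
  | _, _, f, .and φ ψ => .and (φ.rename f) (ψ.rename f)
  | _, _, f, .or φ ψ => .or (φ.rename f) (ψ.rename f)
  | _, _, f, .imp φ ψ => .imp (φ.rename f) (ψ.rename f)
  | _, _, f, .ex φ => .ex (φ.rename (Fin.snoc (Fin.castSucc ∘ f) (Fin.last _)))
  | _, _, f, .all φ => .all (φ.rename (Fin.snoc (Fin.castSucc ∘ f) (Fin.last _)))

/-- Universal closure `∀x₁ … ∀xₙ φ` of a formula in context of length `n`. -/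
def allClose : {n : ℕ} → SetFormula n → SetFormula 0
  | 0, φ => φ
  | _ + 1, φ => allClose (.all φ)

end SetFormula

namespace ImplicativeAlgebra

variable {A : Type u} [CompleteLattice A]

/-- The interpretation `‖φ[x₁,…,xₙ]‖ : Wⁿ → A` of a formula in context, by recursion on the
structure of `φ`:  atomic formulas are interpreted by `∈_W` and `=_W`, `∧` by `×`, `∨` by `+`,
`→` by `→`, `∃` by `∃⃗` over `W` and `∀` by `∀⃗` (i.e. `⨅`) over `W`. -/
noncomputable def interp (IA : ImplicativeAlgebra A) (κ : Cardinal.{u}) :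
    {n : ℕ} → SetFormula n → (Fin n → WSet A κ) → A
  | _, .bot, _ => ⊥
  | _, .mem i j, v => IA.memW (v i).1 (v j).1
  | _, .eq i j, v => IA.eqW (v i).1 (v j).1
  | _, .and φ ψ, v => IA.times (IA.interp κ φ v) (IA.interp κ ψ v)
  | _, .or φ ψ, v => IA.plus (IA.interp κ φ v) (IA.interp κ ψ v)
  | _, .imp φ ψ, v => IA.imp (IA.interp κ φ v) (IA.interp κ ψ v)
  | _, .ex φ, v => IA.aex fun β : WSet A κ => IA.interp κ φ (Fin.snoc v β)
  | _, .all φ, v => ⨅ β : WSet A κ, IA.interp κ φ (Fin.snoc v β)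

end ImplicativeAlgebra

/-!
Transitivity of `=_W` is proved by induction on `α`, for all `β` and `γ` at once: unfolding `=_W`
into `⊆_W` and `∈_W`, a realizer of transitivity at `α, β, γ` is built from one at their
elements. A single realizer for all ranks is obtained as a fixed point `Θ step` of Turing's
combinator, since `Θ step ≤ step (Θ step)`. It lies in `Σ` because bracket abstraction
compiles every closed λ-term into a combination of `K` and `S` lying below it.
-/

inductive CombTerm : Type
  | var (n : ℕ)
  | K
  | S
  | app (t u : CombTerm)

inductive LamTerm : Type
  | var (n : ℕ)
  | app (t u : LamTerm)
  | lam (t : LamTerm)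

namespace CombTerm

/-- Bracket abstraction of the variable `0`; the other variables are shifted down by one. -/
def abstr : CombTerm → CombTerm
  | var 0 => app (app S K) K
  | var (n + 1) => app K (var n)
  | K => app K K
  | S => app K S
  | app t u => app (app S t.abstr) u.abstr

end CombTerm

def LamTerm.compile : LamTerm → CombTerm
  | var n => .var n
  | app t u => .app t.compile u.compile
  | lam t => t.compile.abstr

namespace ImplicativeAlgebra

open Stream'

variable {A : Type u} [CompleteLattice A] (IA : ImplicativeAlgebra A)

def ap (a b : A) : A := sInf {c | a ≤ IA.imp b c}

theorem ap_le_of_le_imp {a b c : A} (h : a ≤ IA.imp b c) : IA.ap a b ≤ c := sInf_le h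

theorem le_imp_ap (a b : A) : a ≤ IA.imp b (IA.ap a b) := by
  rw [ap, IA.imp_sInf]
  exact le_iInf₂ fun _ hc => hc

theorem ap_mono {a a' b b' : A} (ha : a ≤ a') (hb : b ≤ b') : IA.ap a b ≤ IA.ap a' b' :=
  IA.ap_le_of_le_imp (ha.trans ((IA.le_imp_ap a' b').trans (IA.imp_antitone hb)))

theorem ap_mem {a b : A} (ha : a ∈ IA.Sig) (hb : b ∈ IA.Sig) : IA.ap a b ∈ IA.Sig :=
  IA.Sig_mp (IA.Sig_upward ha (IA.le_imp_ap a b)) hb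

theorem top_mem : (⊤ : A) ∈ IA.Sig := IA.Sig_upward IA.Sig_K le_top

def combK : A := ⨅ a : A, ⨅ b : A, IA.imp a (IA.imp b a)

def combS : A := ⨅ a : A, ⨅ b : A, ⨅ c : A,
  IA.imp (IA.imp a (IA.imp b c)) (IA.imp (IA.imp a b) (IA.imp a c))

theorem ap_ap_combK_le (a b : A) : IA.ap (IA.ap IA.combK a) b ≤ a :=
  IA.ap_le_of_le_imp (IA.ap_le_of_le_imp ((iInf_le _ a).trans (iInf_le _ b)))

theorem ap_ap_ap_combS_le (f g a : A) :
    IA.ap (IA.ap (IA.ap IA.combS f) g) a ≤ IA.ap (IA.ap f a) (IA.ap g a) := by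
  set q := IA.ap g a
  set r := IA.ap (IA.ap f a) q
  have hf : f ≤ IA.imp a (IA.imp q r) :=
    (IA.le_imp_ap f a).trans (IA.imp_monotone (IA.le_imp_ap _ q))
  have hS : IA.combS ≤ IA.imp (IA.imp a (IA.imp q r)) (IA.imp (IA.imp a q) (IA.imp a r)) :=
    (iInf_le _ a).trans ((iInf_le _ q).trans (iInf_le _ r))
  refine IA.ap_le_of_le_imp (IA.ap_le_of_le_imp ?_)
  exact (IA.ap_le_of_le_imp (hS.trans (IA.imp_antitone hf))).trans
    (IA.imp_antitone (IA.le_imp_ap g a))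

def evalComb (e : Stream' A) : CombTerm → A
  | .var n => e.get n
  | .K => IA.combK
  | .S => IA.combS
  | .app t u => IA.ap (evalComb e t) (evalComb e u)

def eval : Stream' A → LamTerm → A
  | e, .var n => e.get n
  | e, .app t u => IA.ap (eval e t) (eval e u)
  | e, .lam t => ⨅ a : A, IA.imp a (eval (a :: e) t)

theorem evalComb_mem {e : Stream' A} (he : ∀ n, e.get n ∈ IA.Sig) :
    ∀ t : CombTerm, IA.evalComb e t ∈ IA.Sig
  | .var n => he n
  | .K => IA.Sig_K
  | .S => IA.Sig_S
  | .app t u => IA.ap_mem (evalComb_mem he t) (evalComb_mem he u)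

theorem ap_evalComb_abstr_le (e : Stream' A) (a : A) :
    ∀ t : CombTerm, IA.ap (IA.evalComb e t.abstr) a ≤ IA.evalComb (a :: e) t
  | .var 0 => (IA.ap_ap_ap_combS_le IA.combK IA.combK a).trans (IA.ap_ap_combK_le a _)
  | .var (n + 1) => IA.ap_ap_combK_le (e.get n) a
  | .K => IA.ap_ap_combK_le _ a
  | .S => IA.ap_ap_combK_le _ a
  | .app t u => (IA.ap_ap_ap_combS_le _ _ a).trans
      (IA.ap_mono (ap_evalComb_abstr_le e a t) (ap_evalComb_abstr_le e a u))

theorem evalComb_compile_le : ∀ (e : Stream' A) (t : LamTerm),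
    IA.evalComb e t.compile ≤ IA.eval e t
  | _, .var _ => le_rfl
  | e, .app t u => IA.ap_mono (evalComb_compile_le e t) (evalComb_compile_le e u)
  | e, .lam t => le_iInf fun a => (IA.le_imp_ap _ a).trans <| IA.imp_monotone <|
      (IA.ap_evalComb_abstr_le e a _).trans (evalComb_compile_le (a :: e) t)

theorem eval_mem {e : Stream' A} (he : ∀ n, e.get n ∈ IA.Sig) (t : LamTerm) :
    IA.eval e t ∈ IA.Sig :=
  IA.Sig_upward (IA.evalComb_mem he t.compile) (IA.evalComb_compile_le e t)

end ImplicativeAlgebra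

/-- Variables are de Bruijn indices, written as numerals. -/
instance (n : ℕ) : OfNat LamTerm n := ⟨.var n⟩

local prefix:50 "ƛ " => LamTerm.lam
local infixl:70 " ⬝ " => LamTerm.app

namespace LamTerm

def turingHalf : LamTerm := ƛ ƛ 0 ⬝ (1 ⬝ 1 ⬝ 0)

/-- Turing's fixed-point combinator `Θ = (λx y. y (x x y)) (λx y. y (x x y))`. -/
def turing : LamTerm := turingHalf ⬝ turingHalf

/-- `λ ih u v c. u c (λp. p (λa e. v a (λq. q (λb e' k. k (λh. h b (ih (λh'. h' e e')))))))` -/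
def subTrans : LamTerm :=
  ƛ ƛ ƛ ƛ 2 ⬝ 0 ⬝ (ƛ 0 ⬝ (ƛ ƛ 4 ⬝ 1 ⬝ (ƛ 0 ⬝ (ƛ ƛ ƛ 0 ⬝ (ƛ 0 ⬝ 3 ⬝ (11 ⬝ (ƛ 0 ⬝ 6 ⬝ 3)))))))

/-- `λ ih p. p (λx y. x (λa b. y (λc d h. h (subTrans ih c a) (subTrans ih b d))))` -/
def eqTransStep : LamTerm :=
  ƛ ƛ 0 ⬝ (ƛ ƛ 1 ⬝ (ƛ ƛ 2 ⬝ (ƛ ƛ ƛ 0 ⬝ (subTrans ⬝ 8 ⬝ 2 ⬝ 4) ⬝ (subTrans ⬝ 8 ⬝ 3 ⬝ 1))))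

end LamTerm

namespace ImplicativeAlgebra

open Stream' LamTerm

variable {A : Type u} [CompleteLattice A] (IA : ImplicativeAlgebra A)

theorem eval_lam_le_imp {t : LamTerm} {e : Stream' A} {a b : A}
    (h : IA.eval (a :: e) t ≤ b) : IA.eval e (ƛ t) ≤ IA.imp a b :=
  (iInf_le _ a).trans (IA.imp_monotone h)

theorem ap_eval_lam_le (e : Stream' A) (t : LamTerm) (a : A) :
    IA.ap (IA.eval e (ƛ t)) a ≤ IA.eval (a :: e) t :=
  IA.ap_le_of_le_imp (iInf_le _ a)

theorem eval_turing_app_le (e : Stream' A) (t : LamTerm) :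
    IA.eval e (turing ⬝ t) ≤ IA.eval e (t ⬝ (turing ⬝ t)) :=
  (IA.ap_mono (IA.ap_eval_lam_le e _ _) le_rfl).trans (IA.ap_eval_lam_le _ _ _)

theorem eval_pair_le_times {e : Stream' A} {t u : LamTerm} {a b : A}
    (ht : ∀ h, IA.eval (h :: e) t ≤ a) (hu : ∀ h, IA.eval (h :: e) u ≤ b) :
    IA.eval e (ƛ 0 ⬝ t ⬝ u) ≤ IA.times a b :=
  le_iInf fun _ => IA.eval_lam_le_imp <| IA.ap_le_of_le_imp <|
    (IA.ap_le_of_le_imp (IA.imp_antitone (ht _))).trans (IA.imp_antitone (hu _))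

theorem eval_app_le_of_le_times {e : Stream' A} {c w : LamTerm} {a b x : A}
    (hc : IA.eval e c ≤ IA.times a b) (hw : IA.eval e w ≤ IA.imp a (IA.imp b x)) :
    IA.eval e (c ⬝ w) ≤ x :=
  IA.ap_le_of_le_imp (hc.trans ((iInf_le _ x).trans (IA.imp_antitone hw)))

theorem eval_witness_le_aex {ι : Sort*} {G : ι → A} {e : Stream' A} {w : LamTerm} (i : ι)
    (hw : ∀ k, IA.eval (k :: e) w ≤ G i) : IA.eval e (ƛ 0 ⬝ w) ≤ IA.aex G :=
  le_iInf fun _ => IA.eval_lam_le_imp <|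
    IA.ap_le_of_le_imp ((iInf_le _ i).trans (IA.imp_antitone (hw _)))

theorem eval_app_le_of_le_aex {ι : Sort*} {G : ι → A} {e : Stream' A} {c w : LamTerm} {x : A}
    (hc : IA.eval e c ≤ IA.aex G) (hw : IA.eval e w ≤ ⨅ i, IA.imp (G i) x) :
    IA.eval e (c ⬝ w) ≤ x :=
  IA.ap_le_of_le_imp (hc.trans ((iInf_le _ x).trans (IA.imp_antitone hw)))

theorem eqW_eq_times_subW (α β : PreW A) :
    IA.eqW α β = IA.times (IA.subW α β) (IA.subW β α) := by
  cases α
  cases β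
  rw [eqW]
  rfl

noncomputable def eqTransW (α β γ : PreW A) : A :=
  IA.imp (IA.times (IA.eqW α β) (IA.eqW γ α)) (IA.eqW γ β)

theorem eval_subTrans_le (X Y Z : PreW A) {ih : A} (e : Stream' A)
    (H : ∀ s t u, ih ≤ IA.eqTransW (X.fam s) (Y.fam t) (Z.fam u)) :
    IA.eval e subTrans ≤
      IA.imp ih (IA.imp (IA.subW Y X) (IA.imp (IA.subW X Z) (IA.subW Y Z))) := by
  refine IA.eval_lam_le_imp <| IA.eval_lam_le_imp <| IA.eval_lam_le_imp <|
    le_iInf fun t => IA.eval_lam_le_imp ?_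
  refine IA.eval_app_le_of_le_aex (IA.ap_le_of_le_imp (iInf_le _ t)) <|
    le_iInf fun s => IA.eval_lam_le_imp <| IA.eval_app_le_of_le_times le_rfl <|
    IA.eval_lam_le_imp <| IA.eval_lam_le_imp ?_
  refine IA.eval_app_le_of_le_aex (IA.ap_le_of_le_imp (iInf_le _ s)) <|
    le_iInf fun u => IA.eval_lam_le_imp <| IA.eval_app_le_of_le_times le_rfl <|
    IA.eval_lam_le_imp <| IA.eval_lam_le_imp ?_
  refine IA.eval_witness_le_aex u fun _ => IA.eval_pair_le_times (fun _ => le_rfl) fun _ => ?_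
  exact IA.ap_le_of_le_imp <| (H s t u).trans <| IA.imp_antitone <|
    IA.eval_pair_le_times (fun _ => le_rfl) (fun _ => le_rfl)

theorem eval_eqTransStep_le (α β γ : PreW A) {ih : A} (e : Stream' A)
    (H₁ : ∀ s t u, ih ≤ IA.eqTransW (α.fam s) (γ.fam t) (β.fam u))
    (H₂ : ∀ s t u, ih ≤ IA.eqTransW (α.fam s) (β.fam t) (γ.fam u)) :
    IA.eval e eqTransStep ≤ IA.imp ih (IA.eqTransW α β γ) := by
  refine IA.eval_lam_le_imp <| IA.eval_lam_le_imp <| IA.eval_app_le_of_le_times le_rfl <|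
    IA.eval_lam_le_imp <| IA.eval_lam_le_imp ?_
  refine IA.eval_app_le_of_le_times (IA.eqW_eq_times_subW α β).le <|
    IA.eval_lam_le_imp <| IA.eval_lam_le_imp ?_
  refine IA.eval_app_le_of_le_times (IA.eqW_eq_times_subW γ α).le <|
    IA.eval_lam_le_imp <| IA.eval_lam_le_imp ?_
  rw [IA.eqW_eq_times_subW γ β]
  refine IA.eval_pair_le_times (fun _ => ?_) (fun _ => ?_) <;>
    refine IA.ap_le_of_le_imp <| IA.ap_le_of_le_imp <| IA.ap_le_of_le_imp ?_
  · exact IA.eval_subTrans_le α γ β _ H₁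
  · exact IA.eval_subTrans_le α β γ _ H₂

theorem eval_turing_eqTransStep_le (e : Stream' A) (α β γ : PreW A) :
    IA.eval e (turing ⬝ eqTransStep) ≤ IA.eqTransW α β γ := by
  induction α generalizing β γ with
  | mk ι f v ih =>
    refine (IA.eval_turing_app_le e eqTransStep).trans <| IA.ap_le_of_le_imp <|
      IA.eval_eqTransStep_le _ β γ e (fun s _ _ => ih s _ _) (fun s _ _ => ih s _ _)

end ImplicativeAlgebra

theorem stmt5_general {A : Type u} [CompleteLattice A] (IA : ImplicativeAlgebra A)
    (κ : Cardinal.{u}) :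
    ∃ s₃ ∈ IA.Sig, s₃ ≤ ⨅ α : WSet A κ, ⨅ β : WSet A κ, ⨅ γ : WSet A κ,
      IA.imp (IA.times (IA.eqW α.1 β.1) (IA.eqW γ.1 α.1)) (IA.eqW γ.1 β.1) :=
  ⟨IA.eval (.const ⊤) (.turing ⬝ .eqTransStep),
    IA.eval_mem (fun _ => IA.top_mem) _,
    le_iInf fun α => le_iInf fun β => le_iInf fun γ =>
      IA.eval_turing_eqTransStep_le _ α.1 β.1 γ.1⟩

theorem stmt5 {A : Type u} [CompleteLattice A] (IA : ImplicativeAlgebra A)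
    (κ : Cardinal.{u}) (hκ : κ.IsInaccessible) (hA : Cardinal.mk A < κ) :
    ∃ s₃ ∈ IA.Sig, s₃ ≤ ⨅ α : WSet A κ, ⨅ β : WSet A κ, ⨅ γ : WSet A κ,
      IA.imp (IA.times (IA.eqW α.1 β.1) (IA.eqW γ.1 α.1)) (IA.eqW γ.1 β.1) :=
  stmt5_general IA κ
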